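/- Let δ ∈ (0,1), suppose all payoffs f_i take values in [0,1], for each player i let D_i^δ be a Martin function for the minmax value, and let σ* be a strategy profile such that σ*(h) is a Nash equilibrium of the one-shot game G_O(D^δ,h) for every history h. Then for every initial state there exist a stage n* and a history h* in stage n* such that, setting c_i := E_{h*,σ*}[f_i] for each i ∈ I, the set of runs r ∈ C(h*) satisfying, for every player i, both |f_i(r) − c_i| ≤ δ and v̄_i(r^k) ≤ c_i + 2δ for all k ≥ n*, has P_{h*,σ*}-probability greater than 1 − δ. -/

import Mathlib

open scoped ENNReal NNReal Classical

/-- A multiplayer stochastic game: a nonempty finite set of players `I`, a nonempty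
countable set of states `S`, nonempty finite action sets `A i`, a transition function
`trans` and bounded Borel payoff functions `payoff i` on runs. -/
structure StochGame where
  I : Type
  S : Type
  A : I → Type
  [fintypeI : Fintype I]
  [nonemptyI : Nonempty I]
  [countableS : Countable S]
  [nonemptyS : Nonempty S]
  [fintypeA : ∀ i, Fintype (A i)]
  [nonemptyA : ∀ i, Nonempty (A i)]
  trans : S → (∀ i, A i) → PMF S
  payoff : I → S × (ℕ → (∀ i, A i) × S) → ℝ

open MeasureTheory

attribute [instance] StochGame.fintypeI StochGame.nonemptyI StochGame.countableS
  StochGame.nonemptyS StochGame.fintypeA StochGame.nonemptyA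

namespace StochGame

variable (G : StochGame)

noncomputable instance : DecidableEq G.I := Classical.decEq _

noncomputable instance (i : G.I) : DecidableEq (G.A i) := Classical.decEq _

/-- Action profiles. -/
abbrev ActionProfile := ∀ i, G.A i

/-- Runs `(s¹,a¹,s²,a²,…)`, encoded as an initial state together with a sequence of
(action profile, next state) pairs. -/
abbrev Run := G.S × (ℕ → G.ActionProfile × G.S)

/-- Histories `(s¹,a¹,…,s^n)`, encoded as an initial state together with a finite list of
(action profile, next state) pairs. -/
abbrev History := G.S × List (G.ActionProfile × G.S)

instance : MeasurableSpace G.S := ⊤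
instance : MeasurableSpace G.ActionProfile := ⊤

variable {G}

/-- The final state `s_h` of a history. -/
def lastState (h : G.History) : G.S := h.2.getLast?.elim h.1 Prod.snd

/-- The stage (length) of a history: a history `(s¹,a¹,…,s^n)` is in stage `n`. -/
def stage (h : G.History) : ℕ := h.2.length + 1

/-- The history obtained by appending one action profile and one state. -/
def snocH (h : G.History) (a : G.ActionProfile) (s : G.S) : G.History :=
  (h.1, h.2 ++ [(a, s)])

/-- The history obtained by appending a finite list of (action profile, state) pairs. -/
def catH (h : G.History) (l : List (G.ActionProfile × G.S)) : G.History := (h.1, h.2 ++ l)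

/-- The history in stage 1 consisting of the initial state `s` only. -/
def initH (G : StochGame) (s : G.S) : G.History := (s, [])

/-- All transitions along the list have positive probability when starting from `s`. -/
def ValidFrom (G : StochGame) : G.S → List (G.ActionProfile × G.S) → Prop
  | _, [] => True
  | s, (a, t) :: l => G.trans s a t ≠ 0 ∧ ValidFrom G t l

/-- A history belongs to the set `H` of histories of the game iff all its transitions have
positive probability. -/
def Valid (h : G.History) : Prop := ValidFrom G h.1 h.2

/-- `Ext h h'` means that the history `h'` extends the history `h` (possibly `h = h'`),
written `h ⪯ h'` in the paper. -/
def Ext (h h' : G.History) : Prop := h.1 = h'.1 ∧ h.2 <+: h'.2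

/-- A behavior strategy of player `i`: a mixed action at every history. -/
abbrev Strategy (G : StochGame) (i : G.I) := G.History → PMF (G.A i)

/-- A strategy profile: one behavior strategy for each player. -/
abbrev Profile (G : StochGame) := ∀ i, G.Strategy i

/-- The probability, under the strategy profile `σ`, that after the history `h` play continues
exactly along the finite continuation `l`. -/
noncomputable def contProb (σ : G.Profile) : G.History → List (G.ActionProfile × G.S) → ℝ≥0∞
  | _, [] => 1
  | h, (a, s) :: l =>
      (∏ i, σ i h (a i)) * G.trans (lastState h) a s * contProb σ (snocH h a s) l

/-- The cylinder set `C(h)` of all runs extending the history `h`. -/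
def cyl (h : G.History) : Set G.Run :=
  {r | r.1 = h.1 ∧ ∀ k, (hk : k < h.2.length) → r.2 k = h.2.get ⟨k, hk⟩}

/-- `P` is the family of probability measures `P_{h,σ}` on runs induced, via the
Ionescu-Tulcea/Kolmogorov extension, by a history `h` and a strategy profile `σ`:
each `P h σ` is a probability measure, and the measure of the cylinder set of any finite
extension of `h` is the product of the transition probabilities prescribed by `σ` and `p`.
(These properties determine `P h σ` uniquely, since `P h σ (cyl h) = 1`.) -/
def IsInducedFamily (G : StochGame) (P : G.History → G.Profile → Measure G.Run) : Prop :=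
  (∀ h σ, IsProbabilityMeasure (P h σ)) ∧
    ∀ (h : G.History) (σ : G.Profile) (l : List (G.ActionProfile × G.S)),
      P h σ (cyl (catH h l)) = contProb σ h l

/-- The expected payoff `E_{h,σ}[f_i]` of player `i` in the subgame at `h` under `σ`. -/
noncomputable def expPay (P : G.History → G.Profile → Measure G.Run) (h : G.History)
    (σ : G.Profile) (i : G.I) : ℝ :=
  ∫ r, G.payoff i r ∂(P h σ)

/-- The minmax value `v̄_i(h)` of player `i` at the history `h`. -/
noncomputable def minmaxVal (P : G.History → G.Profile → Measure G.Run) (i : G.I)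
    (h : G.History) : ℝ :=
  ⨅ σ : G.Profile, ⨆ τ : G.Strategy i, expPay P h (Function.update σ i τ) i

/-- The maxmin value `v̲_i(h)` of player `i` at the history `h`. -/
noncomputable def maxminVal (P : G.History → G.Profile → Measure G.Run) (i : G.I)
    (h : G.History) : ℝ :=
  ⨆ τ : G.Strategy i, ⨅ σ : G.Profile, expPay P h (Function.update σ i τ) i

/-- `E[D | h, x]`: the expected value of `D` at the next history, when at history `h` the
players use the mixed action profile `x` and the next state is drawn according to `p`. -/
noncomputable def oneShotExp (D : G.History → ℝ) (h : G.History) (x : ∀ i, PMF (G.A i)) : ℝ :=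
  ∑ a : G.ActionProfile, (∏ i, (x i (a i)).toReal) *
    ∑' s : G.S, (G.trans (lastState h) a s).toReal * D (snocH h a s)

/-- The minmax value `v̄_{O,i}(D,h)` of player `i` in the one-shot game `G_O(D,h)`. -/
noncomputable def oneShotMinmax (D : G.History → ℝ) (i : G.I) (h : G.History) : ℝ :=
  ⨅ x : ∀ j, PMF (G.A j), ⨆ y : PMF (G.A i), oneShotExp D h (Function.update x i y)

/-- The maxmin value `v̲_{O,i}(D,h)` of player `i` in the one-shot game `G_O(D,h)`. -/
noncomputable def oneShotMaxmin (D : G.History → ℝ) (i : G.I) (h : G.History) : ℝ :=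
  ⨆ y : PMF (G.A i), ⨅ x : ∀ j, PMF (G.A j), oneShotExp D h (Function.update x i y)

end StochGame

namespace StochGame

variable {G : StochGame}

/-- `D` is a Martin function with parameter `ε` for player `i` (for the minmax value):
it is bounded; `v̄_i(h) - ε ≤ D h ≤ v̄_i(h)` at every history; `D h ≤ v̄_{O,i}(D,h)` at
every history; and every strategy profile that plays well locally in all the one-shot
games from some history `h'` onwards also plays well globally from `h'` onwards. -/
def IsMartinMinmax (P : G.History → G.Profile → Measure G.Run) (ε : ℝ) (i : G.I)
    (D : G.History → ℝ) : Prop :=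
  (∃ C : ℝ, ∀ h : G.History, |D h| ≤ C) ∧
  (∀ h : G.History, Valid h → minmaxVal P i h - ε ≤ D h ∧ D h ≤ minmaxVal P i h) ∧
  (∀ h : G.History, Valid h → D h ≤ oneShotMinmax D i h) ∧
  (∀ h' : G.History, Valid h' → ∀ σ : G.Profile,
    (∀ h : G.History, Valid h → Ext h' h →
      oneShotMinmax D i h ≤ oneShotExp D h (fun j => σ j h)) →
    (∀ h : G.History, Valid h → Ext h' h →
      oneShotMinmax D i h ≤ expPay P h σ i))

/-- The mixed action profile `x` is a Nash equilibrium of the one-shot game `G_O(D,h)`: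
no player `i` can increase `E[D_i | h, ·]` by unilaterally changing her mixed action. -/
def OneShotNash (D : G.I → G.History → ℝ) (h : G.History) (x : ∀ i, PMF (G.A i)) : Prop :=
  ∀ (i : G.I) (y : PMF (G.A i)),
    oneShotExp (D i) h (Function.update x i y) ≤ oneShotExp (D i) h x

end StochGame

namespace StochGame

variable {G : StochGame}

/-- The prefix `r^k` of a run `r` in stage `k`: the history `(s¹,a¹,…,s^k)`. -/
def prefixRun (r : G.Run) (k : ℕ) : G.History :=
  (r.1, List.ofFn fun j : Fin (k - 1) => r.2 j)

/-- The σ-algebra `𝓕^n` on runs generated by the cylinder sets of histories in stage `n`,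
i.e. by the prefix in stage `n`. -/
def filt (G : StochGame) (n : ℕ) : MeasurableSpace G.Run :=
  MeasurableSpace.comap (fun r : G.Run => prefixRun r n) ⊤

end StochGame

/-! Lévy's upward theorem, applied to `P_{s,σ*}` and the filtration of prefixes, makes
`E_{r^k,σ*}[f_i]` converge to `f_i(r)` for almost every run `r`. Hence for `N` large the runs along
which these conditional payoffs stay `δ/2`-close to `f_i(r)` from stage `N` on have probability
more than `1 - δ`. As `P_{s,σ*}` is the average of the measures `P_{h,σ*}` over the histories `h`
in stage `N`, one of them, `h*`, gives this event probability more than `1 - δ` as well. Along such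
a run in `C(h*)`, `f_i(r)` is `δ/2`-close to `c_i = E_{h*,σ*}[f_i]`, and since `σ*` plays one-shot
Nash equilibria, the Martin property gives
`v̄_i(r^k) - δ ≤ D_i(r^k) ≤ v̄_{O,i}(D_i, r^k) ≤ E_{r^k,σ*}[f_i] ≤ c_i + δ`. -/

lemma abs_tsum_mul_le {α : Type*} {w g : α → ℝ} {C : ℝ} (hw0 : ∀ a, 0 ≤ w a) (hw : HasSum w 1)
    (hg : ∀ a, |g a| ≤ C) : |∑' a, w a * g a| ≤ C := by
  have hle (a : α) : ‖w a * g a‖ ≤ w a * C := by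
    rw [norm_mul, Real.norm_of_nonneg (hw0 a)]
    exact mul_le_mul_of_nonneg_left (hg a) (hw0 a)
  have hsum : Summable fun a => w a * C := hw.summable.mul_right C
  have hnorm : Summable fun a => ‖w a * g a‖ := hsum.of_nonneg_of_le (fun _ => norm_nonneg _) hle
  calc |∑' a, w a * g a| ≤ ∑' a, ‖w a * g a‖ := norm_tsum_le_tsum_norm hnorm
    _ ≤ ∑' a, w a * C := hnorm.tsum_le_tsum hle hsum
    _ = C := by rw [tsum_mul_right, hw.tsum_eq, one_mul]

lemma PMF.hasSum_toReal {α : Type*} (p : PMF α) : HasSum (fun a => (p a).toReal) 1 := by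
  have := ENNReal.hasSum_toReal (p.tsum_coe ▸ ENNReal.one_ne_top)
  rwa [← ENNReal.tsum_toReal_eq p.apply_ne_top, p.tsum_coe, ENNReal.toReal_one] at this

lemma PMF.hasSum_prod_toReal {ι : Type*} [Fintype ι] {β : ι → Type*} [∀ i, Fintype (β i)]
    (x : ∀ i, PMF (β i)) : HasSum (fun a : ∀ i, β i => ∏ i, (x i (a i)).toReal) 1 := by
  convert hasSum_fintype _
  rw [← Fintype.prod_sum fun i j => (x i j).toReal]
  simp [(hasSum_fintype _).unique (PMF.hasSum_toReal _)]

lemma MeasureTheory.exists_lt_measure_of_ae_exists_mem {α : Type*} [MeasurableSpace α]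
    {μ : Measure α} [IsProbabilityMeasure μ] {W : ℕ → Set α} (hW : Monotone W)
    (hae : ∀ᵐ x ∂μ, ∃ N, x ∈ W N) {c : ℝ≥0∞} (hc : c < 1) : ∃ N, c < μ (W N) := by
  have hunion : μ (⋃ N, W N) = 1 := by
    rw [← measure_univ (μ := μ)]
    refine measure_congr (ae_eq_univ.mpr (ae_iff.mp ?_))
    simpa using hae
  exact ((tendsto_measure_iUnion_atTop hW).eventually (lt_mem_nhds (hunion ▸ hc))).exists

namespace StochGame

open Filter Topology Function

variable {G : StochGame}

section Histories

lemma catH_assoc (h : G.History) (l₁ l₂ : List (G.ActionProfile × G.S)) :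
    catH h (l₁ ++ l₂) = catH (catH h l₁) l₂ := by
  simp [catH]

lemma contProb_append (σ : G.Profile) (h : G.History) (l₁ l₂ : List (G.ActionProfile × G.S)) :
    contProb σ h (l₁ ++ l₂) = contProb σ h l₁ * contProb σ (catH h l₁) l₂ := by
  induction l₁ generalizing h with
  | nil => simp [contProb, catH]
  | cons p l₁ ih =>
    obtain ⟨a, s⟩ := p
    rw [List.cons_append, contProb, contProb, ih]
    simp [catH, snocH, mul_assoc]

lemma contProb_eq_zero_of_not_validFrom (σ : G.Profile) (h : G.History)
    (l : List (G.ActionProfile × G.S)) (hl : ¬ ValidFrom G (lastState h) l) :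
    contProb σ h l = 0 := by
  induction l generalizing h with
  | nil => exact absurd trivial hl
  | cons p l ih =>
    obtain ⟨a, s⟩ := p
    rw [contProb]
    by_cases ht : G.trans (lastState h) a s = 0
    · rw [ht, mul_zero, zero_mul]
    · rw [ih _ fun hv => hl ⟨ht, by simpa [lastState, snocH] using hv⟩, mul_zero]

lemma catH_initH {s : G.S} {h : G.History} (hs : h.1 = s) : catH (G.initH s) h.2 = h :=
  Prod.ext (by simp [catH, initH, hs]) (by simp [catH, initH])

lemma cyl_catH_subset (h : G.History) (l : List (G.ActionProfile × G.S)) :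
    cyl (catH h l) ⊆ cyl h := by
  rintro r ⟨h1, h2⟩
  refine ⟨h1, fun k hk => ?_⟩
  simpa [catH, List.getElem_append_left hk] using h2 k (by simp [catH]; omega)

lemma mem_cyl_prefixRun (r : G.Run) (n : ℕ) : r ∈ cyl (prefixRun r n) :=
  ⟨rfl, fun k hk => by simp [prefixRun]⟩

lemma stage_prefixRun (r : G.Run) {n : ℕ} (hn : 1 ≤ n) : stage (prefixRun r n) = n := by
  simp only [stage, prefixRun, List.length_ofFn]
  omega

lemma prefixRun_stage_of_mem_cyl {h : G.History} {r : G.Run} (hr : r ∈ cyl h) :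
    prefixRun r (stage h) = h := by
  refine Prod.ext hr.1 (List.ext_getElem (by simp [stage, prefixRun]) fun k hk _ => ?_)
  simpa [prefixRun] using hr.2 k (by simpa [stage, prefixRun] using hk)

lemma preimage_prefixRun_singleton {h : G.History} {n : ℕ} (hs : stage h = n) :
    (prefixRun · n) ⁻¹' {h} = cyl h := by
  subst hs
  ext r
  refine ⟨fun hr => ?_, prefixRun_stage_of_mem_cyl⟩
  rw [← Set.mem_singleton_iff.mp hr]
  exact mem_cyl_prefixRun r _

lemma preimage_prefixRun_singleton_of_ne {h : G.History} {n : ℕ} (hn : 1 ≤ n)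
    (hs : stage h ≠ n) : (prefixRun · n) ⁻¹' {h} = ∅ :=
  Set.eq_empty_of_forall_notMem fun r hr => hs (hr ▸ stage_prefixRun r hn)

lemma take_prefixRun (r : G.Run) {m n : ℕ} (hmn : m ≤ n) :
    (prefixRun r n).2.take (m - 1) = (prefixRun r m).2 :=
  List.ext_getElem (by simp [prefixRun]; omega) fun k _ _ => by simp [prefixRun]

lemma prefixRun_eq_catH (r : G.Run) {m n : ℕ} (hmn : m ≤ n) :
    prefixRun r n = catH (prefixRun r m) ((prefixRun r n).2.drop (m - 1)) := by
  rw [catH, ← take_prefixRun r hmn, List.take_append_drop]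
  rfl

lemma cyl_nested_or_disjoint (h h' : G.History) :
    (∃ l, h' = catH h l) ∨ (∃ l, h = catH h' l) ∨ Disjoint (cyl h) (cyl h') := by
  rcases Set.disjoint_or_nonempty_inter (cyl h) (cyl h') with hd | ⟨r, hr, hr'⟩
  · exact Or.inr (Or.inr hd)
  rw [← prefixRun_stage_of_mem_cyl hr, ← prefixRun_stage_of_mem_cyl hr']
  rcases le_total (stage h) (stage h') with hle | hle
  · exact Or.inl ⟨_, prefixRun_eq_catH r hle⟩
  · exact Or.inr (Or.inl ⟨_, prefixRun_eq_catH r hle⟩)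

end Histories

section Measurability

instance : DiscreteMeasurableSpace G.S := ⟨fun _ => MeasurableSpace.measurableSet_top⟩

instance : DiscreteMeasurableSpace G.ActionProfile := ⟨fun _ => MeasurableSpace.measurableSet_top⟩

lemma measurableSet_cyl (h : G.History) : MeasurableSet (cyl h) := by
  have hcyl : cyl h = Prod.fst ⁻¹' {h.1} ∩
      ⋂ k : Fin h.2.length, (fun r : G.Run => r.2 k) ⁻¹' {h.2.get k} := by
    ext r
    simp only [cyl, Set.mem_inter_iff, Set.mem_preimage, Set.mem_singleton_iff, Set.mem_iInter]
    exact and_congr_right fun _ => ⟨fun h2 k => h2 k k.2, fun h2 k hk => h2 ⟨k, hk⟩⟩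
  rw [hcyl]
  exact (measurable_fst (measurableSet_singleton _)).inter <| .iInter fun k =>
    ((measurable_pi_apply _).comp measurable_snd) (measurableSet_singleton _)

lemma measurableSet_preimage_prefixRun_singleton {n : ℕ} (hn : 1 ≤ n) (h : G.History) :
    MeasurableSet ((prefixRun · n) ⁻¹' {h}) := by
  by_cases hs : stage h = n
  · rw [preimage_prefixRun_singleton hs]
    exact measurableSet_cyl h
  · rw [preimage_prefixRun_singleton_of_ne hn hs]
    exact .empty

lemma preimage_prefixRun_eq_iUnion (n : ℕ) (T : Set G.History) :
    (prefixRun · n) ⁻¹' T = ⋃ h : T, (prefixRun · n) ⁻¹' {(h : G.History)} := by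
  ext r
  simp

lemma isPiSystem_range_cyl : IsPiSystem (Set.range (cyl : G.History → Set G.Run)) := by
  rintro _ ⟨h, rfl⟩ _ ⟨h', rfl⟩ hne
  rcases cyl_nested_or_disjoint h h' with ⟨l, rfl⟩ | ⟨l, rfl⟩ | hd
  · exact ⟨_, (Set.inter_eq_right.mpr (cyl_catH_subset h l)).symm⟩
  · exact ⟨_, (Set.inter_eq_left.mpr (cyl_catH_subset h' l)).symm⟩
  · exact absurd hd (Set.not_disjoint_iff_nonempty_inter.mpr hne)

lemma filt_le_generateFrom_cyl {n : ℕ} (hn : 1 ≤ n) :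
    G.filt n ≤ MeasurableSpace.generateFrom (Set.range cyl) := by
  rintro _ ⟨T, -, rfl⟩
  rw [preimage_prefixRun_eq_iUnion]
  refine .iUnion fun h => ?_
  by_cases hs : stage (h : G.History) = n
  · rw [preimage_prefixRun_singleton hs]
    exact MeasurableSpace.measurableSet_generateFrom ⟨h, rfl⟩
  · rw [preimage_prefixRun_singleton_of_ne hn hs]
    exact MeasurableSpace.measurableSet_empty _

lemma measurable_filt_comp_prefixRun {m : MeasurableSpace G.Run} {n : ℕ} (hm : G.filt n ≤ m)
    {β : Type*} [MeasurableSpace β] (g : G.History → β) :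
    Measurable[m] fun r => g (prefixRun r n) :=
  (measurable_from_top.comp (Measurable.of_comap_le le_rfl)).mono hm le_rfl

lemma le_iSup_filt : (inferInstance : MeasurableSpace G.Run) ≤ ⨆ n, G.filt (n + 1) := by
  have hfilt : ∀ n, G.filt (n + 1) ≤ ⨆ n, G.filt (n + 1) := le_iSup (fun n => G.filt (n + 1))
  have hfst : Measurable[⨆ n, G.filt (n + 1)] fun r : G.Run => r.1 :=
    measurable_filt_comp_prefixRun (hfilt 0) Prod.fst
  have hsnd : ∀ k, Measurable[⨆ n, G.filt (n + 1)] fun r : G.Run => r.2 k := fun k => by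
    convert measurable_filt_comp_prefixRun (hfilt (k + 1))
      fun h : G.History => h.2.getD k (Classical.arbitrary _) using 2 with r
    simp [prefixRun, -List.ofFn_succ]
  exact sup_le hfst.comap_le
    (@measurable_pi_lambda _ _ _ (⨆ n, G.filt (n + 1)) _ (fun r : G.Run => r.2) hsnd).comap_le

lemma generateFrom_range_cyl :
    MeasurableSpace.generateFrom (Set.range cyl) = (inferInstance : MeasurableSpace G.Run) :=
  le_antisymm (MeasurableSpace.generateFrom_le fun _ ⟨h, hh⟩ => hh ▸ measurableSet_cyl h)
    (le_iSup_filt.trans (iSup_le fun _ => filt_le_generateFrom_cyl (by omega)))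

lemma filt_le {n : ℕ} (hn : 1 ≤ n) : G.filt n ≤ (inferInstance : MeasurableSpace G.Run) :=
  generateFrom_range_cyl ▸ filt_le_generateFrom_cyl hn

lemma filt_mono {m n : ℕ} (hmn : m ≤ n) : G.filt m ≤ G.filt n := by
  have hfactor : (fun r : G.Run => prefixRun r m) =
      (fun h : G.History => (h.1, h.2.take (m - 1))) ∘ fun r => prefixRun r n := by
    funext r
    exact Prod.ext rfl (take_prefixRun r hmn).symm
  rw [filt, filt, hfactor, ← MeasurableSpace.comap_comp]
  exact MeasurableSpace.comap_mono le_top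

/-- Indexed from `0`: its `n`-th σ-algebra is `𝓕^(n+1)`, as histories start in stage `1`. -/
def prefixFiltration (G : StochGame) : Filtration ℕ (inferInstance : MeasurableSpace G.Run) where
  seq n := G.filt (n + 1)
  mono' _ _ hmn := filt_mono (by omega)
  le' _ := filt_le (by omega)

end Measurability

section InducedFamily

variable {P : G.History → G.Profile → Measure G.Run} (hP : IsInducedFamily G P)
include hP

lemma measure_cyl_self (h : G.History) (σ : G.Profile) : P h σ (cyl h) = 1 := by
  simpa [catH, contProb] using hP.2 h σ []

lemma measure_compl_cyl_self (h : G.History) (σ : G.Profile) : P h σ (cyl h)ᶜ = 0 := by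
  have := hP.1 h σ
  rw [prob_compl_eq_one_sub (measurableSet_cyl h), measure_cyl_self hP, tsub_self]

lemma measure_cyl_eq_zero_of_disjoint {h h' : G.History} (σ : G.Profile)
    (hd : Disjoint (cyl h) (cyl h')) : P h σ (cyl h') = 0 :=
  measure_mono_null hd.subset_compl_left (measure_compl_cyl_self hP h σ)

lemma restrict_cyl_catH (h : G.History) (σ : G.Profile) (l : List (G.ActionProfile × G.S)) :
    (P h σ).restrict (cyl (catH h l)) = P h σ (cyl (catH h l)) • P (catH h l) σ := by
  have := hP.1 h σ
  have := hP.1 (catH h l) σ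
  refine ext_of_generate_finite _ generateFrom_range_cyl.symm isPiSystem_range_cyl ?_ (by simp)
  rintro _ ⟨h', rfl⟩
  rw [Measure.restrict_apply (measurableSet_cyl h'), Measure.smul_apply, smul_eq_mul]
  rcases cyl_nested_or_disjoint (catH h l) h' with ⟨l', rfl⟩ | ⟨l', hl'⟩ | hd
  · rw [Set.inter_eq_left.mpr (cyl_catH_subset _ l'), hP.2 (catH h l), hP.2, ← catH_assoc, hP.2,
      contProb_append]
  · have hsub : cyl (catH h l) ⊆ cyl h' := hl' ▸ cyl_catH_subset h' l'
    have hone : P (catH h l) σ (cyl h') = 1 :=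
      le_antisymm prob_le_one (measure_cyl_self hP (catH h l) σ ▸ measure_mono hsub)
    rw [Set.inter_eq_right.mpr hsub, hone, mul_one]
  · rw [Set.inter_comm, hd.inter_eq, measure_empty,
      measure_cyl_eq_zero_of_disjoint hP σ hd, mul_zero]

lemma measure_initH_cyl_eq_zero_of_ne {s : G.S} {h : G.History} (σ : G.Profile) (hs : h.1 ≠ s) :
    P (G.initH s) σ (cyl h) = 0 :=
  measure_cyl_eq_zero_of_disjoint hP σ <| Set.disjoint_left.mpr fun _ hr hr' =>
    hs (hr'.1.symm.trans hr.1)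

lemma restrict_initH_cyl (s : G.S) (h : G.History) (σ : G.Profile) :
    (P (G.initH s) σ).restrict (cyl h) = P (G.initH s) σ (cyl h) • P h σ := by
  by_cases hs : h.1 = s
  · simpa [catH_initH hs] using restrict_cyl_catH hP (G.initH s) σ h.2
  · rw [measure_initH_cyl_eq_zero_of_ne hP σ hs, zero_smul,
      Measure.restrict_eq_zero.mpr (measure_initH_cyl_eq_zero_of_ne hP σ hs)]

lemma fst_eq_and_valid_of_measure_cyl_ne_zero {s : G.S} {h : G.History} {σ : G.Profile}
    (hne : P (G.initH s) σ (cyl h) ≠ 0) : h.1 = s ∧ Valid h := by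
  by_cases hs : h.1 = s
  · refine ⟨hs, by_contra fun hv => hne ?_⟩
    rw [← catH_initH hs, hP.2]
    exact contProb_eq_zero_of_not_validFrom σ _ _ (hs ▸ hv)
  · exact absurd (measure_initH_cyl_eq_zero_of_ne hP σ hs) hne

lemma ae_valid_prefixRun (s : G.S) (σ : G.Profile) :
    ∀ᵐ r ∂P (G.initH s) σ, ∀ k, Valid (prefixRun r k) := by
  have hcyl : ∀ᵐ r ∂P (G.initH s) σ, ∀ h : G.History, r ∈ cyl h → Valid h := by
    refine ae_all_iff.mpr fun h => ?_
    by_cases hv : Valid h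
    · exact ae_of_all _ fun _ _ => hv
    · have hnull : P (G.initH s) σ (cyl h) = 0 :=
        by_contra fun hne => hv (fst_eq_and_valid_of_measure_cyl_ne_zero hP hne).2
      filter_upwards [measure_eq_zero_iff_ae_notMem.mp hnull] with r hr hmem using absurd hmem hr
  filter_upwards [hcyl] with r hr k using hr _ (mem_cyl_prefixRun r k)

lemma exists_history_lt_measure (s : G.S) (σ : G.Profile) {n : ℕ} (hn : 1 ≤ n) (t : Set G.Run)
    {c : ℝ≥0∞} (hc : c < P (G.initH s) σ t) :
    ∃ h : G.History, Valid h ∧ h.1 = s ∧ stage h = n ∧ c < P h σ t := by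
  by_contra! hle
  have := hP.1 (G.initH s) σ
  set μ := P (G.initH s) σ
  have hfiber (h : G.History) :
      μ (t ∩ (prefixRun · n) ⁻¹' {h}) ≤ c * μ ((prefixRun · n) ⁻¹' {h}) := by
    by_cases hs : stage h = n
    · rw [preimage_prefixRun_singleton hs, ← Measure.restrict_apply' (measurableSet_cyl h),
        restrict_initH_cyl hP, Measure.smul_apply, smul_eq_mul, mul_comm]
      by_cases hnull : μ (cyl h) = 0
      · rw [hnull, mul_zero, mul_zero]
      · obtain ⟨h1, hv⟩ := fst_eq_and_valid_of_measure_cyl_ne_zero hP hnull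
        exact mul_le_mul_left (hle h hv h1 hs) _
    · simp [preimage_prefixRun_singleton_of_ne hn hs]
  have hpartition : ∑' h : G.History, μ ((prefixRun · n) ⁻¹' {h}) = 1 := by
    rw [← measure_iUnion (pairwise_disjoint_fiber _)
      (measurableSet_preimage_prefixRun_singleton hn), ← measure_univ (μ := μ)]
    congr 1
    ext r
    simp
  have hμt : μ t ≤ c := calc
    μ t = μ (⋃ h : G.History, t ∩ (prefixRun · n) ⁻¹' {h}) := by
      rw [← Set.inter_iUnion]
      congr 1
      ext r
      simp
    _ ≤ ∑' h : G.History, μ (t ∩ (prefixRun · n) ⁻¹' {h}) := measure_iUnion_le _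
    _ ≤ ∑' h : G.History, c * μ ((prefixRun · n) ⁻¹' {h}) := ENNReal.tsum_le_tsum hfiber
    _ = c := by rw [ENNReal.tsum_mul_left, hpartition, mul_one]
  exact hμt.not_gt hc

end InducedFamily

section Levy

variable {P : G.History → G.Profile → Measure G.Run} (hP : IsInducedFamily G P)
  {f : G.Run → ℝ} {C : ℝ} (hfC : ∀ r, |f r| ≤ C)
include hP hfC

lemma abs_integral_le_of_abs_le (h : G.History) (σ : G.Profile) :
    |∫ r, f r ∂P h σ| ≤ C := by
  have := hP.1 h σ
  simpa using norm_integral_le_of_norm_le_const (μ := P h σ)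
    (ae_of_all _ fun r => (Real.norm_eq_abs _).trans_le (hfC r))

variable (hfm : Measurable f)
include hfm

lemma integrable_of_abs_le (h : G.History) (σ : G.Profile) : Integrable f (P h σ) := by
  have := hP.1 h σ
  exact .of_bound hfm.aestronglyMeasurable C
    (ae_of_all _ fun r => (Real.norm_eq_abs _).trans_le (hfC r))

lemma condExp_filt_ae_eq (σ : G.Profile) (s : G.S) {n : ℕ} (hn : 1 ≤ n) :
    (P (G.initH s) σ)[f | G.filt n] =ᵐ[P (G.initH s) σ]
      fun r => ∫ r', f r' ∂P (prefixRun r n) σ := by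
  have := hP.1 (G.initH s) σ
  set μ := P (G.initH s) σ
  set X := fun r => ∫ r', f r' ∂P (prefixRun r n) σ
  have hXm : Measurable[G.filt n] X :=
    measurable_filt_comp_prefixRun le_rfl fun h => ∫ r', f r' ∂P h σ
  have hXi : Integrable X μ := .of_bound (hXm.mono (filt_le hn) le_rfl).aestronglyMeasurable C
    (ae_of_all _ fun r => by simpa using abs_integral_le_of_abs_le hP hfC (prefixRun r n) σ)
  have hfiber (h : G.History) : ∫ r in (prefixRun · n) ⁻¹' {h}, X r ∂μ =
      ∫ r in (prefixRun · n) ⁻¹' {h}, f r ∂μ := by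
    by_cases hs : stage h = n
    · have hX : Set.EqOn X (fun _ => ∫ r', f r' ∂P h σ) (cyl h) := fun r hr => by
        rw [← preimage_prefixRun_singleton hs] at hr
        simp only [X, Set.mem_preimage.mp hr |> Set.mem_singleton_iff.mp]
      rw [preimage_prefixRun_singleton hs, setIntegral_congr_fun (measurableSet_cyl h) hX,
        setIntegral_const, restrict_initH_cyl hP, integral_smul_measure]
      rfl
    · simp [preimage_prefixRun_singleton_of_ne hn hs]
  refine (ae_eq_condExp_of_forall_setIntegral_eq (filt_le hn)
    (integrable_of_abs_le hP hfC hfm _ σ) (fun _ _ _ => hXi.integrableOn) ?_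
    hXm.aestronglyMeasurable).symm
  rintro _ ⟨T, -, rfl⟩ -
  have hmeas (h : T) : MeasurableSet ((prefixRun · n) ⁻¹' {(h : G.History)}) :=
    measurableSet_preimage_prefixRun_singleton hn h.1
  have hdisj : Pairwise (Disjoint on fun h : T => (prefixRun · n) ⁻¹' {(h : G.History)}) :=
    fun _ _ hne => pairwise_disjoint_fiber _ (Subtype.coe_injective.ne hne)
  rw [preimage_prefixRun_eq_iUnion, integral_iUnion hmeas hdisj hXi.integrableOn,
    integral_iUnion hmeas hdisj (integrable_of_abs_le hP hfC hfm _ σ).integrableOn]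
  exact tsum_congr fun h => hfiber h

lemma ae_tendsto_integral_prefixRun (σ : G.Profile) (s : G.S) :
    ∀ᵐ r ∂P (G.initH s) σ,
      Tendsto (fun n => ∫ r', f r' ∂P (prefixRun r n) σ) atTop (𝓝 (f r)) := by
  have := hP.1 (G.initH s) σ
  have hlevy := (integrable_of_abs_le hP hfC hfm (G.initH s) σ).tendsto_ae_condExp
    (ℱ := G.prefixFiltration) (hfm.mono le_iSup_filt le_rfl).stronglyMeasurable
  have hcond := ae_all_iff.mpr fun n => condExp_filt_ae_eq hP hfC hfm σ s (n := n + 1) (by omega)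
  filter_upwards [hlevy, hcond] with r hr hcr
  rw [← tendsto_add_atTop_iff_nat 1]
  exact hr.congr fun n => hcr n

end Levy

section OneShot

lemma abs_oneShotExp_le {D : G.History → ℝ} {C : ℝ} (hC : ∀ h, |D h| ≤ C) (h : G.History)
    (x : ∀ j, PMF (G.A j)) : |oneShotExp D h x| ≤ C := by
  have := abs_tsum_mul_le (fun _ => Finset.prod_nonneg fun _ _ => ENNReal.toReal_nonneg)
    (PMF.hasSum_prod_toReal x) fun a =>
      abs_tsum_mul_le (fun _ => ENNReal.toReal_nonneg)
        (PMF.hasSum_toReal (G.trans (lastState h) a)) fun s => hC (snocH h a s)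
  rwa [tsum_fintype] at this

lemma oneShotMinmax_le_of_forall_le {D : G.History → ℝ} {C : ℝ} (hC : ∀ h, |D h| ≤ C)
    {i : G.I} {h : G.History} {x : ∀ j, PMF (G.A j)}
    (hx : ∀ y : PMF (G.A i), oneShotExp D h (update x i y) ≤ oneShotExp D h x) :
    oneShotMinmax D i h ≤ oneShotExp D h x := by
  have hbddAbove (x' : ∀ j, PMF (G.A j)) :
      BddAbove (Set.range fun y : PMF (G.A i) => oneShotExp D h (update x' i y)) :=
    ⟨C, by rintro _ ⟨y, rfl⟩; exact le_of_abs_le (abs_oneShotExp_le hC h _)⟩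
  have hbddBelow : BddBelow (Set.range fun x' : ∀ j, PMF (G.A j) =>
      ⨆ y : PMF (G.A i), oneShotExp D h (update x' i y)) := by
    refine ⟨-C, ?_⟩
    rintro _ ⟨x', rfl⟩
    calc -C ≤ oneShotExp D h (update x' i (x' i)) := by
          rw [update_eq_self]
          exact neg_le_of_abs_le (abs_oneShotExp_le hC h x')
      _ ≤ _ := le_ciSup (hbddAbove x') (x' i)
  exact (ciInf_le hbddBelow x).trans (ciSup_le hx)

lemma minmaxVal_le_expPay_add {P : G.History → G.Profile → Measure G.Run} {ε : ℝ}
    {D : G.I → G.History → ℝ} {σ : G.Profile} {i : G.I} (hDi : IsMartinMinmax P ε i (D i))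
    (hσ : ∀ h, Valid h → OneShotNash D h fun j => σ j h) {h : G.History} (hv : Valid h) :
    minmaxVal P i h ≤ expPay P h σ i + ε := by
  obtain ⟨⟨C, hC⟩, hbounds, hsub, hglobal⟩ := hDi
  have hlocal : oneShotMinmax (D i) i h ≤ expPay P h σ i :=
    hglobal h hv σ (fun h' hv' _ => oneShotMinmax_le_of_forall_le hC (hσ h' hv' i)) h hv
      ⟨rfl, List.prefix_refl _⟩
  linarith [(hbounds h hv).1, hsub h hv]

end OneShot

def settledRuns (P : G.History → G.Profile → Measure G.Run) (σ : G.Profile) (ε : ℝ) (N : ℕ) :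
    Set G.Run :=
  {r | ∀ k, N ≤ k →
    Valid (prefixRun r k) ∧ ∀ i, |expPay P (prefixRun r k) σ i - G.payoff i r| ≤ ε}

lemma monotone_settledRuns (P : G.History → G.Profile → Measure G.Run) (σ : G.Profile) (ε : ℝ) :
    Monotone (settledRuns P σ ε) :=
  fun _ _ hMN _ hr k hk => hr k (hMN.trans hk)

lemma ae_exists_mem_settledRuns {P : G.History → G.Profile → Measure G.Run}
    (hP : IsInducedFamily G P) (hfm : ∀ i, Measurable (G.payoff i)) {C : ℝ}
    (hfC : ∀ i r, |G.payoff i r| ≤ C) {ε : ℝ} (hε : 0 < ε) (σ : G.Profile) (s : G.S) :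
    ∀ᵐ r ∂P (G.initH s) σ, ∃ N, r ∈ settledRuns P σ ε N := by
  have hconv := ae_all_iff.mpr fun i => ae_tendsto_integral_prefixRun hP (hfC i) (hfm i) σ s
  filter_upwards [hconv, ae_valid_prefixRun hP s σ] with r hr hv
  have hclose : ∀ᶠ k in atTop, ∀ i, |expPay P (prefixRun r k) σ i - G.payoff i r| ≤ ε :=
    eventually_all.mpr fun i => ((hr i).eventually (Metric.closedBall_mem_nhds _ hε)).mono
      fun k hk => by rwa [Real.dist_eq] at hk
  obtain ⟨N, hN⟩ := eventually_atTop.mp hclose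
  exact ⟨N, fun k hk => ⟨hv k, hN k hk⟩⟩

lemma settledRuns_inter_cyl_subset {P : G.History → G.Profile → Measure G.Run} {δ : ℝ}
    (hδ : 0 < δ) {D : G.I → G.History → ℝ} (hD : ∀ i, IsMartinMinmax P δ i (D i))
    {σ : G.Profile} (hσ : ∀ h, Valid h → OneShotNash D h fun j => σ j h)
    {h : G.History} {N : ℕ} (hN : stage h = N) :
    settledRuns P σ (δ / 2) N ∩ cyl h ⊆ {r | r ∈ cyl h ∧ ∀ i,
      |G.payoff i r - expPay P h σ i| ≤ δ ∧
      ∀ k, N ≤ k → minmaxVal P i (prefixRun r k) ≤ expPay P h σ i + 2 * δ} := by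
  rintro r ⟨hsettled, hr⟩
  have hprefix : prefixRun r N = h := hN ▸ prefixRun_stage_of_mem_cyl hr
  have hclose (i : G.I) : |expPay P h σ i - G.payoff i r| ≤ δ / 2 :=
    hprefix ▸ (hsettled N le_rfl).2 i
  refine ⟨hr, fun i => ⟨by rw [abs_sub_comm]; linarith [hclose i], fun k hk => ?_⟩⟩
  have hminmax := minmaxVal_le_expPay_add (hD i) hσ (hsettled k hk).1
  linarith [abs_le.mp (hclose i), abs_le.mp ((hsettled k hk).2 i)]

theorem exists_good_subgame_general (G : StochGame)
    (P : G.History → G.Profile → Measure G.Run) (hP : IsInducedFamily G P)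
    (hfm : ∀ i, Measurable (G.payoff i))
    (hf01 : ∀ (i : G.I) (r : G.Run), G.payoff i r ∈ Set.Icc (0 : ℝ) 1)
    (δ : ℝ) (hδ0 : 0 < δ)
    (D : G.I → G.History → ℝ) (hD : ∀ i, IsMartinMinmax P δ i (D i))
    (σstar : G.Profile)
    (hσstar : ∀ h : G.History, Valid h → OneShotNash D h (fun j => σstar j h))
    (s : G.S) :
    ∃ (nstar : ℕ) (hstar : G.History), Valid hstar ∧ hstar.1 = s ∧ stage hstar = nstar ∧
      ENNReal.ofReal (1 - δ) <
        P hstar σstar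
          {r : G.Run | r ∈ cyl hstar ∧ ∀ i : G.I,
            |G.payoff i r - expPay P hstar σstar i| ≤ δ ∧
            ∀ k : ℕ, nstar ≤ k →
              minmaxVal P i (prefixRun r k) ≤ expPay P hstar σstar i + 2 * δ} := by
  have hf1 (i : G.I) (r : G.Run) : |G.payoff i r| ≤ 1 :=
    abs_le.mpr ⟨by linarith [(hf01 i r).1], (hf01 i r).2⟩
  have := hP.1 (G.initH s) σstar
  obtain ⟨N, hN⟩ := exists_lt_measure_of_ae_exists_mem (monotone_settledRuns P σstar (δ / 2))
    (ae_exists_mem_settledRuns hP hfm hf1 (half_pos hδ0) σstar s)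
    (ENNReal.ofReal_lt_one.mpr (by linarith : 1 - δ < 1))
  obtain ⟨hstar, hv, hs, hstage, hlt⟩ := exists_history_lt_measure hP s σstar N.succ_pos _
    (hN.trans_le (measure_mono (monotone_settledRuns P σstar (δ / 2) N.le_succ)))
  refine ⟨N + 1, hstar, hv, hs, hstage, hlt.trans_le ?_⟩
  rw [← measure_inter_conull (measure_compl_cyl_self hP hstar σstar)]
  exact measure_mono (settledRuns_inter_cyl_subset hδ0 hD hσstar hstage)

/-- **Theorem (identifying a good subgame `Γ_{h*}` and a target payoff `c`).**
Let `δ ∈ (0,1)`, suppose all payoffs lie in `[0,1]`, let `D_i` be a Martin function for the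
minmax value (with parameter `δ`) for each player, and let `σ*` play a Nash equilibrium of
the one-shot game `G_O(D,h)` at every history `h`. Then for every initial state `s` there
are a stage `n*` and a history `h*` in stage `n*` such that, with `c_i := E_{h*,σ*}[f_i]`,
the set of runs `r ∈ C(h*)` on which, for every player `i`, `|f_i(r) - c_i| ≤ δ` and
`v̄_i(r^k) ≤ c_i + 2δ` for every `k ≥ n*`, has `P_{h*,σ*}`-probability more than `1 - δ`. -/
theorem exists_good_subgame (G : StochGame)
    (P : G.History → G.Profile → Measure G.Run) (hP : IsInducedFamily G P)
    (hfm : ∀ i, Measurable (G.payoff i))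
    (hf01 : ∀ (i : G.I) (r : G.Run), G.payoff i r ∈ Set.Icc (0 : ℝ) 1)
    (δ : ℝ) (hδ0 : 0 < δ) (hδ1 : δ < 1)
    (D : G.I → G.History → ℝ) (hD : ∀ i, IsMartinMinmax P δ i (D i))
    (σstar : G.Profile)
    (hσstar : ∀ h : G.History, Valid h → OneShotNash D h (fun j => σstar j h))
    (s : G.S) :
    ∃ (nstar : ℕ) (hstar : G.History), Valid hstar ∧ hstar.1 = s ∧ stage hstar = nstar ∧
      ENNReal.ofReal (1 - δ) <
        P hstar σstar
          {r : G.Run | r ∈ cyl hstar ∧ ∀ i : G.I,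
            |G.payoff i r - expPay P hstar σstar i| ≤ δ ∧
            ∀ k : ℕ, nstar ≤ k →
              minmaxVal P i (prefixRun r k) ≤ expPay P hstar σstar i + 2 * δ} :=
  exists_good_subgame_general G P hP hfm hf01 δ hδ0 D hD σstar hσstar s

end StochGame
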